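/- Let X : ℝ → [0,∞) be continuous with X(0)=0 and X(t) → ∞ as |t| → ∞, and d_X the associated CRT pseudometric. Fix t > 0 and set h_t = inf_{u ≥ t} X(u), Γ_t(r) = inf{u ≥ t : X(u) = X(t) - r} for 0 ≤ r ≤ X(t) - h_t. Then d_X(Γ_t(r), Γ_t(r')) = |r - r'| for all r, r' ∈ [0, X(t) - h_t], i.e. r ↦ [Γ_t(r)] is a geodesic path in the quotient tree from [t] toward the spine. -/

import Mathlib

/-! The descent from `t` is parametrised by the level `c = X t - r`: `Γ_t(r)` is the first time
after `t` at which `X` hits `c`. Between the first hitting times of two levels `c' ≤ c`, the path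
stays at height `≥ c'` (by the intermediate value theorem, a dip below `c'` would have hit `c'`
earlier) and ends at height `c'`, so the running infimum in `d_X` is `c'` and
`d_X = c + c' - 2c' = c - c'`. The levels down to `h_t` are all reached because `X → ∞` at
infinity, so `X` attains its infimum on `[t, ∞)`. -/

open Set Filter

/-- `č(s,t)` for the self-similar CRT pseudometric. -/
noncomputable def crtCheck (X : ℝ → ℝ) (s t : ℝ) : ℝ :=
  if 0 ≤ s * t then sInf (X '' Set.uIcc s t)
  else sInf (X '' (Set.Ioo (min s t) (max s t))ᶜ)

/-- The self-similar CRT pseudometric `d_X(s,t) = X s + X t - 2 č(s,t)`. -/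
noncomputable def crtDist (X : ℝ → ℝ) (s t : ℝ) : ℝ :=
  X s + X t - 2 * crtCheck X s t

-- `sInf ∅ = 0`: the junk value when `X` never takes the value `c` on `[t, ∞)`.
noncomputable def firstHit (X : ℝ → ℝ) (t c : ℝ) : ℝ :=
  sInf {u | t ≤ u ∧ X u = c}

section FirstHit

variable {X : ℝ → ℝ} {t u c c' : ℝ}

theorem exists_mem_Icc_apply_eq (hX : Continuous X) (hc : c ≤ X t) (hu : t ≤ u)
    (hXu : X u ≤ c) :
    ∃ v ∈ Icc t u, X v = c :=
  intermediate_value_Icc' hu hX.continuousOn ⟨hXu, hc⟩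

theorem firstHit_le (hv : t ≤ u) (hXu : X u = c) : firstHit X t c ≤ u :=
  csInf_le ⟨t, fun _ hw => hw.1⟩ ⟨hv, hXu⟩

theorem firstHit_le_of_le (hX : Continuous X) (hc : c ≤ X t) (hu : t ≤ u) (hXu : X u ≤ c) :
    firstHit X t c ≤ u := by
  obtain ⟨v, hv, hXv⟩ := exists_mem_Icc_apply_eq hX hc hu hXu
  exact (firstHit_le hv.1 hXv).trans hv.2

theorem firstHit_mem (hX : Continuous X) (hc : c ≤ X t) (hu : t ≤ u) (hXu : X u ≤ c) :
    t ≤ firstHit X t c ∧ X (firstHit X t c) = c := by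
  obtain ⟨v, hv, hXv⟩ := exists_mem_Icc_apply_eq hX hc hu hXu
  have hclosed : IsClosed {u | t ≤ u ∧ X u = c} :=
    isClosed_Ici.inter (isClosed_singleton.preimage hX)
  exact hclosed.csInf_mem ⟨v, hv.1, hXv⟩ ⟨t, fun _ hw => hw.1⟩

theorem le_apply_of_le_firstHit (hX : Continuous X) (hc : c ≤ X t) (hu : t ≤ u)
    (hu_le : u ≤ firstHit X t c) : c ≤ X u := by
  by_contra! hlt
  obtain ⟨v, hv, hXv⟩ := exists_mem_Icc_apply_eq hX hc hu hlt.le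
  have hvu : v = u := le_antisymm hv.2 (hu_le.trans (firstHit_le hv.1 hXv))
  exact hlt.ne (hvu ▸ hXv)

theorem firstHit_anti (hX : Continuous X) (hcc' : c' ≤ c) (hc : c ≤ X t) (hu : t ≤ u)
    (hXu : X u ≤ c') : firstHit X t c ≤ firstHit X t c' := by
  obtain ⟨ht_le, hX_eq⟩ := firstHit_mem hX (hcc'.trans hc) hu hXu
  exact firstHit_le_of_le hX hc ht_le (hX_eq.le.trans hcc')

end FirstHit

section CRT

variable {X : ℝ → ℝ} {s s' t u c c' : ℝ}

theorem crtDist_comm : crtDist X s s' = crtDist X s' s := by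
  unfold crtDist crtCheck
  rw [mul_comm s, uIcc_comm, min_comm, max_comm]
  ring

theorem crtCheck_of_nonneg_of_le (hs : 0 ≤ s) (hss' : s ≤ s') :
    crtCheck X s s' = sInf (X '' Icc s s') := by
  rw [crtCheck, if_pos (mul_nonneg hs (hs.trans hss')), uIcc_of_le hss']

theorem crtCheck_firstHit (hX : Continuous X) (ht : 0 ≤ t) (hcc' : c' ≤ c) (hc : c ≤ X t)
    (hu : t ≤ u) (hXu : X u ≤ c') :
    crtCheck X (firstHit X t c) (firstHit X t c') = c' := by
  obtain ⟨hta, -⟩ := firstHit_mem hX hc hu (hXu.trans hcc')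
  obtain ⟨-, hXb⟩ := firstHit_mem hX (hcc'.trans hc) hu hXu
  have hab := firstHit_anti hX hcc' hc hu hXu
  rw [crtCheck_of_nonneg_of_le (ht.trans hta) hab]
  refine IsLeast.csInf_eq ⟨⟨_, right_mem_Icc.2 hab, hXb⟩, ?_⟩
  rintro _ ⟨x, hx, rfl⟩
  exact le_apply_of_le_firstHit hX (hcc'.trans hc) (hta.trans hx.1) hx.2

theorem crtDist_firstHit_of_le (hX : Continuous X) (ht : 0 ≤ t) (hcc' : c' ≤ c)
    (hc : c ≤ X t) (hu : t ≤ u) (hXu : X u ≤ c') :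
    crtDist X (firstHit X t c) (firstHit X t c') = c - c' := by
  rw [crtDist, crtCheck_firstHit hX ht hcc' hc hu hXu,
    (firstHit_mem hX hc hu (hXu.trans hcc')).2, (firstHit_mem hX (hcc'.trans hc) hu hXu).2]
  ring

theorem crtDist_firstHit (hX : Continuous X) (ht : 0 ≤ t) (hc : c ≤ X t) (hc' : c' ≤ X t)
    (hu : t ≤ u) (hXu : X u ≤ min c c') :
    crtDist X (firstHit X t c) (firstHit X t c') = |c - c'| := by
  rcases le_total c' c with hcc' | hcc'
  · rw [crtDist_firstHit_of_le hX ht hcc' hc hu (hXu.trans (min_le_right _ _)),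
      abs_of_nonneg (sub_nonneg.2 hcc')]
  · rw [crtDist_comm, crtDist_firstHit_of_le hX ht hcc' hc' hu (hXu.trans (min_le_left _ _)),
      abs_sub_comm, abs_of_nonneg (sub_nonneg.2 hcc')]

end CRT

theorem exists_isMinOn_Ici {X : ℝ → ℝ} (hX : Continuous X)
    (hdiv : Tendsto X (cocompact ℝ) atTop) (t : ℝ) : ∃ u ∈ Ici t, IsMinOn X (Ici t) u :=
  hX.continuousOn.exists_isMinOn' isClosed_Ici self_mem_Ici
    ((hdiv.eventually (eventually_ge_atTop (X t))).filter_mono inf_le_left)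

theorem crt_descent_geodesic_general (X : ℝ → ℝ)
    (hcont : Continuous X)
    (hdiv : Tendsto X (cocompact ℝ) atTop)
    (t : ℝ) (ht : 0 < t)
    (h : ℝ) (hh : h = sInf (X '' Ici t))
    (Γ : ℝ → ℝ) (hΓ : ∀ r, Γ r = sInf {u : ℝ | t ≤ u ∧ X u = X t - r}) :
    ∀ r ∈ Icc 0 (X t - h), ∀ r' ∈ Icc 0 (X t - h),
      crtDist X (Γ r) (Γ r') = |r - r'| := by
  rintro r ⟨hr₀, hr⟩ r' ⟨hr'₀, hr'⟩
  obtain ⟨u₀, hu₀, hmin⟩ := exists_isMinOn_Ici hcont hdiv t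
  have hh₀ : h = X u₀ := by
    rw [hh]
    refine IsLeast.csInf_eq ⟨mem_image_of_mem X hu₀, ?_⟩
    rintro _ ⟨x, hx, rfl⟩
    exact hmin hx
  have hΓ_eq : ∀ r, Γ r = firstHit X t (X t - r) := hΓ
  rw [hΓ_eq, hΓ_eq, crtDist_firstHit hcont ht.le (by linarith) (by linarith) hu₀
    (le_min (by linarith) (by linarith)), abs_sub_comm]
  congr 1
  ring

/-- fix `t > 0`, let `h_t = inf_{u ≥ t} X u` and
`Γ_t(r) = inf {u ≥ t : X u = X t - r}` for `0 ≤ r ≤ X t - h_t`. Then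
`d_X(Γ_t(r), Γ_t(r')) = |r - r'|`, i.e. `r ↦ [Γ_t(r)]` is a geodesic path in
the quotient tree from `[t]` toward the spine. -/
theorem crt_descent_geodesic (X : ℝ → ℝ)
    (hcont : Continuous X) (hnonneg : ∀ u, 0 ≤ X u) (h0 : X 0 = 0)
    (hdiv : Tendsto X (cocompact ℝ) atTop)
    (t : ℝ) (ht : 0 < t)
    (h : ℝ) (hh : h = sInf (X '' Ici t))
    (Γ : ℝ → ℝ) (hΓ : ∀ r, Γ r = sInf {u : ℝ | t ≤ u ∧ X u = X t - r}) :
    ∀ r ∈ Icc 0 (X t - h), ∀ r' ∈ Icc 0 (X t - h),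
      crtDist X (Γ r) (Γ r') = |r - r'| :=
  crt_descent_geodesic_general X hcont hdiv t ht h hh Γ hΓ
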